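/- arXiv:1902.02890 — 3 statements merged into one kernel-verified Lean document; each statement's English description precedes it below -/
import Mathlib

section
/- Let p ≥ 1, N a positive integer, and let q₁, …, q_N ≥ 0 with ∑ᵢ qᵢ = 1. Then ∑ᵢ qᵢ·(log(2/qᵢ))^{2/p} ≤ (log(2N))^{2/p}, where terms with qᵢ = 0 are interpreted as 0. -/
/-!
For `N ≥ 2`, the function `x ↦ x (log (2/x))²` lies below its tangent line at `x = 1/N` on the
whole interval `[0, 1]`; summing that tangent-line bound against the probability vector `q` gives
the case `p = 1`. For `p ≥ 1` the exponent `2/p` is at most `2`, and the monotonicity of weighted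
power means reduces the claim to the case `p = 1`.
-/

open Real Finset

lemma hasDerivAt_exp_neg_mul_sq_add (c v : ℝ) :
    HasDerivAt (fun w => exp (-w) * (w ^ 2 + c)) (exp (-v) * (2 * v - v ^ 2 - c)) v :=
  ((hasDerivAt_neg v).exp.mul ((hasDerivAt_pow 2 v).add_const c)).congr_deriv (by
    push_cast; ring)

lemma exp_neg_mul_sq_sub_sq_add_le {u v : ℝ} (hu : 1 ≤ u) (huv : 2 ≤ u + v) :
    exp (-v) * (v ^ 2 + (2 * u - u ^ 2)) ≤ exp (-u) * (u ^ 2 + (2 * u - u ^ 2)) := by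
  set F : ℝ → ℝ := fun w => exp (-w) * (w ^ 2 + (2 * u - u ^ 2))
  have hF : ∀ w, HasDerivAt F (exp (-w) * ((u - w) * (u + w - 2))) w := fun w => by
    convert hasDerivAt_exp_neg_mul_sq_add (2 * u - u ^ 2) w using 2
    ring
  have hFc : Continuous F := by fun_prop
  rcases le_total v u with hvu | huv'
  · have hmono : MonotoneOn F (Set.Icc v u) := by
      refine monotoneOn_of_hasDerivWithinAt_nonneg (convex_Icc v u) hFc.continuousOn
        (fun w _ => (hF w).hasDerivWithinAt) fun w hw => ?_
      rw [interior_Icc] at hw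
      have : 0 ≤ (u - w) * (u + w - 2) := mul_nonneg (by linarith [hw.2]) (by linarith [hw.1])
      positivity
    exact hmono ⟨le_rfl, hvu⟩ ⟨hvu, le_rfl⟩ hvu
  · have hanti : AntitoneOn F (Set.Ici u) := by
      refine antitoneOn_of_hasDerivWithinAt_nonpos (convex_Ici u) hFc.continuousOn
        (fun w _ => (hF w).hasDerivWithinAt) fun w hw => ?_
      rw [interior_Ici] at hw
      have : (u - w) * (u + w - 2) ≤ 0 :=
        mul_nonpos_of_nonpos_of_nonneg (by linarith [hw.out]) (by linarith [hw.out])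
      exact mul_nonpos_of_nonneg_of_nonpos (exp_pos _).le this
    exact hanti Set.self_mem_Ici huv' huv'

lemma mul_log_two_div_sq_le_tangent {n x : ℝ} (hn : 2 ≤ n) (hx0 : 0 ≤ x) (hx1 : x ≤ 1) :
    x * log (2 / x) ^ 2 ≤ (log (2 * n) ^ 2 - 2 * log (2 * n)) * x + 2 * log (2 * n) / n := by
  set u := log (2 * n)
  have hlog2 := log_two_gt_d9
  have hu : 2 * log 2 ≤ u := by
    rw [← log_rpow two_pos]
    exact log_le_log (by positivity) (by norm_num; linarith)
  have hn0 : 0 < n := by linarith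
  rcases hx0.eq_or_lt with rfl | hx
  · simp only [zero_mul, mul_zero, zero_add]
    exact div_nonneg (by linarith) hn0.le
  set v := log (2 / x)
  have hv : log 2 ≤ v := log_le_log two_pos (le_div_self two_pos.le hx hx1)
  have hexp_v : exp (-v) = x / 2 := by
    rw [exp_neg, exp_log (by positivity), inv_div]
  have hexp_u : exp (-u) = 1 / (2 * n) := by
    rw [exp_neg, exp_log (by positivity), inv_eq_one_div]
  have hmax := exp_neg_mul_sq_sub_sq_add_le (u := u) (v := v) (by linarith) (by linarith)
  rw [hexp_v, hexp_u] at hmax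
  have hbound : x * (v ^ 2 + (2 * u - u ^ 2)) ≤ 2 * u / n := by
    calc x * (v ^ 2 + (2 * u - u ^ 2)) = 2 * (x / 2 * (v ^ 2 + (2 * u - u ^ 2))) := by ring
      _ ≤ 2 * (1 / (2 * n) * (u ^ 2 + (2 * u - u ^ 2))) :=
          mul_le_mul_of_nonneg_left hmax two_pos.le
      _ = 2 * u / n := by field_simp; ring
  linarith

lemma log_div_nonneg_of_le {a x : ℝ} (hx0 : 0 ≤ x) (hxa : x ≤ a) : 0 ≤ log (a / x) := by
  rcases hx0.eq_or_lt with rfl | hx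
  · simp
  · exact log_nonneg ((one_le_div hx).mpr hxa)

lemma sum_mul_log_two_div_sq_le {ι : Type*} [Fintype ι] (q : ι → ℝ) (hq0 : ∀ i, 0 ≤ q i)
    (hq1 : ∑ i, q i = 1) :
    ∑ i, q i * log (2 / q i) ^ 2 ≤ log (2 * Fintype.card ι) ^ 2 := by
  have hq_le_one : ∀ i, q i ≤ 1 := fun i => hq1 ▸ single_le_sum (fun j _ => hq0 j) (mem_univ i)
  obtain hcard | hcard | hcard :
      Fintype.card ι = 0 ∨ Fintype.card ι = 1 ∨ 2 ≤ Fintype.card ι := by omega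
  · rw [Fintype.card_eq_zero_iff] at hcard
    simp at hq1
  · obtain ⟨a, ha⟩ := Fintype.card_eq_one_iff.mp hcard
    have hsum : ∀ f : ι → ℝ, ∑ i, f i = f a := fun f =>
      Fintype.sum_eq_single a fun i hi => absurd (ha i) hi
    rw [hsum] at hq1 ⊢
    simp [hq1, hcard]
  · have hn : (2 : ℝ) ≤ Fintype.card ι := by exact_mod_cast hcard
    set n : ℝ := ((Fintype.card ι : ℕ) : ℝ)
    calc ∑ i, q i * log (2 / q i) ^ 2
        ≤ ∑ i, ((log (2 * n) ^ 2 - 2 * log (2 * n)) * q i + 2 * log (2 * n) / n) :=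
          sum_le_sum fun i _ => mul_log_two_div_sq_le_tangent hn (hq0 i) (hq_le_one i)
      _ = log (2 * n) ^ 2 := by
          rw [sum_add_distrib, ← mul_sum, hq1, sum_const, card_univ, nsmul_eq_mul]
          field_simp
          ring

/-- Monotonicity of weighted power means in the exponent. -/
lemma sum_mul_rpow_le_of_sum_mul_rpow_le {ι : Type*} (s : Finset ι) (w y : ι → ℝ) {L a b : ℝ}
    (hw0 : ∀ i ∈ s, 0 ≤ w i) (hw1 : ∑ i ∈ s, w i = 1) (hy : ∀ i ∈ s, 0 ≤ y i) (hL : 0 ≤ L)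
    (hb : 0 < b) (hba : b ≤ a) (h : ∑ i ∈ s, w i * y i ^ a ≤ L ^ a) :
    ∑ i ∈ s, w i * y i ^ b ≤ L ^ b := by
  have ha : 0 < a := hb.trans_le hba
  have hpow : ∀ i ∈ s, (y i ^ b) ^ (a / b) = y i ^ a := fun i hi => by
    rw [← rpow_mul (hy i hi), mul_div_cancel₀ a hb.ne']
  calc ∑ i ∈ s, w i * y i ^ b
      ≤ (∑ i ∈ s, w i * (y i ^ b) ^ (a / b)) ^ (1 / (a / b)) :=
        arith_mean_le_rpow_mean s w _ hw0 hw1 (fun i hi => rpow_nonneg (hy i hi) b)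
          ((one_le_div hb).mpr hba)
    _ = (∑ i ∈ s, w i * y i ^ a) ^ (b / a) := by
        rw [sum_congr rfl fun i hi => by rw [hpow i hi], one_div_div]
    _ ≤ (L ^ a) ^ (b / a) :=
        rpow_le_rpow (sum_nonneg fun i hi => mul_nonneg (hw0 i hi) (rpow_nonneg (hy i hi) a)) h
          (div_pos hb ha).le
    _ = L ^ b := by rw [← rpow_mul hL, mul_div_cancel₀ b ha.ne']

theorem sum_q_log_bound_general
    (p : ℝ) (hp : 1 ≤ p) (N : ℕ) (q : Fin N → ℝ)
    (hq0 : ∀ i, 0 ≤ q i) (hq1 : ∑ i, q i = 1) :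
    ∑ i, q i * (Real.log (2 / q i)) ^ (2 / p) ≤ (Real.log (2 * N)) ^ (2 / p) := by
  have hsq : ∑ i, q i * log (2 / q i) ^ (2 : ℝ) ≤ log (2 * N) ^ (2 : ℝ) := by
    simpa only [rpow_two, Fintype.card_fin] using sum_mul_log_two_div_sq_le q hq0 hq1
  have hq_le_two : ∀ i, q i ≤ 2 := fun i => by
    linarith [hq1 ▸ single_le_sum (fun j _ => hq0 j) (mem_univ i)]
  refine sum_mul_rpow_le_of_sum_mul_rpow_le univ q _ (fun i _ => hq0 i) hq1
    (fun i _ => log_div_nonneg_of_le (hq0 i) (hq_le_two i))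
    (by exact_mod_cast log_natCast_nonneg (2 * N)) (by positivity) (div_le_self zero_le_two hp)
    hsq

/-- Jensen-type bound: ∑ qᵢ (log(2/qᵢ))^{2/p} ≤ (log(2N))^{2/p} for a probability
vector q on N outcomes. -/
theorem sum_q_log_bound
    (p : ℝ) (hp : 1 ≤ p) (N : ℕ) (hN : 0 < N) (q : Fin N → ℝ)
    (hq0 : ∀ i, 0 ≤ q i) (hq1 : ∑ i, q i = 1) :
    ∑ i, q i * (Real.log (2 / q i)) ^ (2 / p) ≤ (Real.log (2 * N)) ^ (2 / p) :=
  sum_q_log_bound_general p hp N q hq0 hq1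
end

section
/- Let Y be a real random variable with E[|Y|^p] ≤ 2K^p·p! for all integers p ≥ 2 and E[Y] = 0 (or more generally E[uY/K] ≤ 0 where needed). Then for every u with |u| < 1, E[exp(uY/K)] ≤ 1 + 2u²/(1−|u|) ≤ exp(2u²/(1−|u|)). -/
/-!
Since `exp t - 1 - t = ∑_{p ≥ 2} t^p / p! ≤ ∑_{p ≥ 2} |t|^p / p!`, integrating termwise against the
moment bounds gives `E exp X ≤ 1 + E X + ∑_{p ≥ 2} E|X|^p / p!`. For `X = uY/K` the `p`-th term is at
most `2|u|^p`, and the geometric series sums to `2u² / (1 - |u|)`.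
-/

open MeasureTheory Real
open scoped Nat

lemma Real.hasSum_pow_add_two_div_factorial (t : ℝ) :
    HasSum (fun p : ℕ => t ^ (p + 2) / (p + 2)!) (exp t - 1 - t) := by
  have h := NormedSpace.expSeries_div_hasSum_exp (𝔸 := ℝ) t
  rw [← exp_eq_exp_ℝ, ← hasSum_nat_add_iff' 2] at h
  simpa [Finset.sum_range_succ, sub_sub] using h

lemma Real.exp_sub_one_sub_le_tsum (t : ℝ) :
    exp t - 1 - t ≤ ∑' p : ℕ, |t| ^ (p + 2) / (p + 2)! := by
  refine hasSum_le (fun p => ?_) (hasSum_pow_add_two_div_factorial t)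
    (hasSum_pow_add_two_div_factorial |t|).summable.hasSum
  gcongr ?_ / _
  exact (le_abs_self _).trans_eq (abs_pow t _)

section

variable {Ω : Type*} [MeasurableSpace Ω] {μ : Measure Ω} {X : Ω → ℝ}

lemma lintegral_exp_sub_one_sub_le_tsum (hX : AEMeasurable X μ) :
    ∫⁻ ω, ENNReal.ofReal (exp (X ω) - 1 - X ω) ∂μ ≤
      ∑' p : ℕ, ∫⁻ ω, ENNReal.ofReal (|X ω| ^ (p + 2) / (p + 2)!) ∂μ := calc
  _ ≤ ∫⁻ ω, ENNReal.ofReal (∑' p : ℕ, |X ω| ^ (p + 2) / (p + 2)!) ∂μ :=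
    lintegral_mono fun ω => ENNReal.ofReal_le_ofReal (exp_sub_one_sub_le_tsum _)
  _ = ∫⁻ ω, ∑' p : ℕ, ENNReal.ofReal (|X ω| ^ (p + 2) / (p + 2)!) ∂μ := by
    congr! 2 with ω
    exact ENNReal.ofReal_tsum_of_nonneg (fun p => by positivity)
      (hasSum_pow_add_two_div_factorial _).summable
  _ = _ := lintegral_tsum fun p => ((hX.abs.pow_const _).div_const _).ennreal_ofReal

lemma integral_exp_le_of_moment_le [IsProbabilityMeasure μ] {b : ℕ → ℝ} {s : ℝ}
    (hX : Integrable X μ) (hexp : Integrable (fun ω => exp (X ω)) μ)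
    (hmom : ∀ p : ℕ, Integrable (fun ω => |X ω| ^ (p + 2)) μ)
    (hb : ∀ p : ℕ, ∫ ω, |X ω| ^ (p + 2) ∂μ ≤ (p + 2)! * b p) (hs : HasSum b s) :
    ∫ ω, exp (X ω) ∂μ ≤ 1 + ∫ ω, X ω ∂μ + s := by
  have hb_nonneg : ∀ p, 0 ≤ b p := fun p =>
    nonneg_of_mul_nonneg_right ((integral_nonneg fun ω => by positivity).trans (hb p))
      (by positivity)
  have hexp_sub : Integrable (fun ω => exp (X ω) - 1) μ := hexp.sub (integrable_const 1)
  have hφ : Integrable (fun ω => exp (X ω) - 1 - X ω) μ := hexp_sub.sub hX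
  have hφ_le : ∫ ω, (exp (X ω) - 1 - X ω) ∂μ ≤ s := by
    rw [integral_eq_lintegral_of_nonneg_ae
      (ae_of_all _ fun ω => by simp only [Pi.zero_apply]; linarith [add_one_le_exp (X ω)])
      hφ.aestronglyMeasurable]
    -- monotone convergence in `ℝ≥0∞` needs no integrability of `exp |X|`
    refine ENNReal.toReal_le_of_le_ofReal (hs.nonneg hb_nonneg) ?_
    calc _ ≤ _ := lintegral_exp_sub_one_sub_le_tsum hX.aemeasurable
      _ ≤ ∑' p : ℕ, ENNReal.ofReal (b p) := by
        refine ENNReal.tsum_le_tsum fun p => ?_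
        rw [← ofReal_integral_eq_lintegral_ofReal ((hmom p).div_const _)
          (Filter.Eventually.of_forall fun ω => by positivity), integral_div]
        exact ENNReal.ofReal_le_ofReal ((div_le_iff₀' (by positivity)).2 (hb p))
      _ = ENNReal.ofReal s := by
        rw [← ENNReal.ofReal_tsum_of_nonneg hb_nonneg hs.summable, hs.tsum_eq]
  rw [integral_sub hexp_sub hX, integral_sub hexp (integrable_const 1),
    integral_const, probReal_univ, one_smul] at hφ_le
  linarith

end

lemma hasSum_pow_add_two_of_lt_one {r : ℝ} (h₀ : 0 ≤ r) (h₁ : r < 1) :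
    HasSum (fun p : ℕ => r ^ (p + 2)) (r ^ 2 / (1 - r)) := by
  simpa [pow_add, mul_comm, div_eq_mul_inv] using (hasSum_geometric_of_lt_one h₀ h₁).mul_left (r ^ 2)

theorem moment_bounds_mgf_bound_general
    {Ω : Type*} [MeasurableSpace Ω] (μ : Measure Ω) [IsProbabilityMeasure μ]
    (Y : Ω → ℝ) (K : ℝ) (hK : 0 < K)
    (hmean : Integrable Y μ ∧ ∫ ω, Y ω ∂μ = 0)
    (hmom : ∀ p : ℕ, 2 ≤ p → Integrable (fun ω => |Y ω| ^ p) μ ∧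
      ∫ ω, |Y ω| ^ p ∂μ ≤ 2 * K ^ p * (Nat.factorial p))
    (u : ℝ) (hu : |u| < 1)
    (hint : Integrable (fun ω => Real.exp (u * Y ω / K)) μ) :
    ∫ ω, Real.exp (u * Y ω / K) ∂μ ≤ 1 + 2 * u ^ 2 / (1 - |u|) ∧
    (1 : ℝ) + 2 * u ^ 2 / (1 - |u|) ≤ Real.exp (2 * u ^ 2 / (1 - |u|)) := by
  obtain ⟨hY, hY_mean⟩ := hmean
  refine ⟨?_, add_comm (1 : ℝ) _ ▸ add_one_le_exp _⟩
  have habs : ∀ p ω, |u * Y ω / K| ^ p = (|u| / K) ^ p * |Y ω| ^ p := fun p ω => by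
    rw [abs_div, abs_mul, abs_of_pos hK, ← mul_pow]; ring
  have hgeom : HasSum (fun p : ℕ => 2 * |u| ^ (p + 2)) (2 * u ^ 2 / (1 - |u|)) := by
    simpa [mul_div_assoc] using (hasSum_pow_add_two_of_lt_one (abs_nonneg u) hu).mul_left 2
  have hmgf := integral_exp_le_of_moment_le ((hY.const_mul u).div_const K) hint
    (fun p => by simpa only [habs] using ((hmom (p + 2) (by omega)).1.const_mul _)) (fun p => ?_)
    hgeom
  · rwa [integral_div, integral_const_mul, hY_mean, mul_zero, zero_div, add_zero] at hmgf
  simp only [habs, integral_const_mul]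
  calc (|u| / K) ^ (p + 2) * ∫ ω, |Y ω| ^ (p + 2) ∂μ
      ≤ (|u| / K) ^ (p + 2) * (2 * K ^ (p + 2) * (p + 2)!) := by
        gcongr; exact_mod_cast (hmom (p + 2) (by omega)).2
    _ = (p + 2)! * (2 * |u| ^ (p + 2)) := by rw [div_pow]; field_simp

/-- Moment bounds E[|Y|^p] ≤ 2K^p·p! (p ≥ 2) and E[Y] = 0 imply the mgf bound
E[exp(uY/K)] ≤ 1 + 2u²/(1−|u|) ≤ exp(2u²/(1−|u|)) for |u| < 1. -/
theorem moment_bounds_mgf_bound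
    {Ω : Type*} [MeasurableSpace Ω] (μ : Measure Ω) [IsProbabilityMeasure μ]
    (Y : Ω → ℝ) (K : ℝ) (hK : 0 < K) (hmY : Measurable Y)
    (hmean : Integrable Y μ ∧ ∫ ω, Y ω ∂μ = 0)
    (hmom : ∀ p : ℕ, 2 ≤ p → Integrable (fun ω => |Y ω| ^ p) μ ∧
      ∫ ω, |Y ω| ^ p ∂μ ≤ 2 * K ^ p * (Nat.factorial p))
    (u : ℝ) (hu : |u| < 1)
    (hint : Integrable (fun ω => Real.exp (u * Y ω / K)) μ) :
    ∫ ω, Real.exp (u * Y ω / K) ∂μ ≤ 1 + 2 * u ^ 2 / (1 - |u|) ∧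
    (1 : ℝ) + 2 * u ^ 2 / (1 - |u|) ≤ Real.exp (2 * u ^ 2 / (1 - |u|)) :=
  moment_bounds_mgf_bound_general μ Y K hK hmean hmom u hu hint
end

section
/- Let X ~ N(θ, σ²I_d) and M any 2^k-valued quantization of X with θ-independent kernel. Then Tr(I_M(θ)) ≤ min{d/σ², (32/3)·k/σ²}. -/
/-!
With `v = σ²`, write `p = E[b(X)]` for the probability of a cell and `g = E[(X - θ) b(X)]`, so
that the cell contributes `‖g‖² / (p v²)` to the trace. Cauchy–Schwarz against the weight `b`
bounds `g_i² / p` by `E[(X_i - θ_i)² b(X)]`, and since the cells partition unity these sum to `v`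
in each coordinate: this is the `d / v` bound. For the `log N` bound, pair `b` with the
exponential tilt in the direction `g` (Donsker–Varadhan, from the pointwise Young inequality
`a y ≤ q eᵃ - y (log q + 1)` for `y ∈ [0, 1]`); the Gaussian moment generating function
`E[exp (t ⟪g, X - θ⟫)] = exp (t² v ‖g‖² / 2)` then gives `‖g‖² ≤ 2 v p² log (1/p)`, and the
entropy `∑ p log (1/p)` of the quantizer output is at most `log N = k log 2`.
-/

open MeasureTheory Finset ProbabilityTheory Real
open scoped NNReal

section WeightedBounds

variable {α : Type*} [MeasurableSpace α] {μ : Measure α}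

theorem ae_norm_le_one_of_mem_Icc {b : α → ℝ} (hb : ∀ x, b x ∈ Set.Icc 0 1) :
    ∀ᵐ x ∂μ, ‖b x‖ ≤ 1 :=
  .of_forall fun x ↦ (Real.norm_of_nonneg (hb x).1).trans_le (hb x).2

theorem integrable_of_mem_Icc [IsFiniteMeasure μ] {b : α → ℝ} (hbm : Measurable b)
    (hb : ∀ x, b x ∈ Set.Icc 0 1) : Integrable b μ :=
  (integrable_const (1 : ℝ)).mono' hbm.aestronglyMeasurable (ae_norm_le_one_of_mem_Icc hb)

theorem sq_integral_mul_le_integral_mul_integral_sq_mul {f w : α → ℝ} (hw : ∀ x, 0 ≤ w x)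
    (hwi : Integrable w μ) (hfw : Integrable (fun x ↦ f x * w x) μ)
    (hf2w : Integrable (fun x ↦ f x ^ 2 * w x) μ) :
    (∫ x, f x * w x ∂μ) ^ 2 ≤ (∫ x, w x ∂μ) * ∫ x, f x ^ 2 * w x ∂μ := by
  have hquad : ∀ c : ℝ, 0 ≤ (∫ x, w x ∂μ) * (c * c) + (-2 * ∫ x, f x * w x ∂μ) * c
      + ∫ x, f x ^ 2 * w x ∂μ := fun c ↦ calc
    0 ≤ ∫ x, (c - f x) ^ 2 * w x ∂μ :=
      integral_nonneg fun x ↦ mul_nonneg (sq_nonneg _) (hw x)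
    _ = ∫ x, (c * c) * w x + (-2 * c) * (f x * w x) + f x ^ 2 * w x ∂μ :=
      integral_congr_ae (.of_forall fun x ↦ by ring)
    _ = _ := by
      rw [integral_add (by fun_prop) hf2w, integral_add (hwi.const_mul _) (hfw.const_mul _),
        integral_const_mul, integral_const_mul]
      ring
  have := discrim_le_zero hquad
  rw [discrim] at this
  linarith

theorem mul_le_mul_exp_sub_mul_log_add_one {y : ℝ} (hy : y ∈ Set.Icc 0 1) {q : ℝ}
    (hq : 0 < q) (a : ℝ) : a * y ≤ q * exp a - y * (log q + 1) := by
  rcases hy.1.eq_or_lt with rfl | hy0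
  · simpa using (mul_pos hq (exp_pos a)).le
  -- `1 + s ≤ exp s` at `s = a + log (q / y)`, and `y log y ≤ 0`
  have h := add_one_le_exp (a + log q - log y)
  rw [exp_sub, exp_add, exp_log hq, exp_log hy0, le_div_iff₀ hy0] at h
  nlinarith [mul_log_nonpos hy.1 hy.2]

theorem integral_mul_le_mul_integral_exp_sub {Z b : α → ℝ} (hb : ∀ x, b x ∈ Set.Icc 0 1)
    (hbi : Integrable b μ) (hZb : Integrable (fun x ↦ Z x * b x) μ)
    (hexp : Integrable (fun x ↦ exp (Z x)) μ) {q : ℝ} (hq : 0 < q) :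
    ∫ x, Z x * b x ∂μ ≤ q * (∫ x, exp (Z x) ∂μ) - (∫ x, b x ∂μ) * (log q + 1) := calc
  ∫ x, Z x * b x ∂μ ≤ ∫ x, q * exp (Z x) - b x * (log q + 1) ∂μ :=
    integral_mono hZb ((hexp.const_mul q).sub (hbi.mul_const _))
      fun x ↦ mul_le_mul_exp_sub_mul_log_add_one (hb x) hq (Z x)
  _ = _ := by rw [integral_sub (hexp.const_mul q) (hbi.mul_const _), integral_const_mul,
    integral_mul_const]

theorem sq_le_four_mul_mul_of_forall_mul_le {G A B : ℝ} (hG : 0 < G) (hB : 0 < B)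
    (h : ∀ t > 0, t * G ≤ A + t ^ 2 * B) : G ^ 2 ≤ 4 * A * B := by
  have key : G / (2 * B) * G - (G / (2 * B)) ^ 2 * B = G ^ 2 / (4 * B) := by
    field_simp
    ring
  have := h (G / (2 * B)) (by positivity)
  have : G ^ 2 / (4 * B) ≤ A := by linarith
  rw [div_le_iff₀ (by positivity)] at this
  linarith

theorem sq_integral_mul_le_negMulLog_of_integral_exp_le {Z b : α → ℝ} {K : ℝ}
    (hK : 0 < K) (hb : ∀ x, b x ∈ Set.Icc 0 1) (hbi : Integrable b μ) (hp : 0 < ∫ x, b x ∂μ)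
    (hZb : Integrable (fun x ↦ Z x * b x) μ)
    (hexp : ∀ t, Integrable (fun x ↦ exp (t * Z x)) μ)
    (hmgf : ∀ t, ∫ x, exp (t * Z x) ∂μ ≤ exp (t ^ 2 * K / 2))
    (hG : 0 < ∫ x, Z x * b x ∂μ) :
    (∫ x, Z x * b x ∂μ) ^ 2 ≤ 2 * K * (∫ x, b x ∂μ) * negMulLog (∫ x, b x ∂μ) := by
  set p := ∫ x, b x ∂μ
  suffices h : ∀ t > 0, t * ∫ x, Z x * b x ∂μ ≤ negMulLog p + t ^ 2 * (p * K / 2) by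
    have := sq_le_four_mul_mul_of_forall_mul_le hG (by positivity) h
    linarith
  intro t ht
  -- Donsker–Varadhan with the tilt `q = p exp (-t² K / 2)`
  have hq : 0 < p * exp (-(t ^ 2 * K / 2)) := by positivity
  have h := integral_mul_le_mul_integral_exp_sub hb hbi
    (hZb.const_mul t |>.congr (.of_forall fun x ↦ by simp only; ring)) (hexp t) hq
  have hlin : ∫ x, t * Z x * b x ∂μ = t * ∫ x, Z x * b x ∂μ := by
    simp_rw [mul_assoc]
    exact integral_const_mul _ _
  have hmgf' : p * exp (-(t ^ 2 * K / 2)) * ∫ x, exp (t * Z x) ∂μ ≤ p := calc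
    _ ≤ p * exp (-(t ^ 2 * K / 2)) * exp (t ^ 2 * K / 2) :=
      mul_le_mul_of_nonneg_left (hmgf t) hq.le
    _ = p := by rw [mul_assoc, ← exp_add, neg_add_cancel, exp_zero, mul_one]
  rw [hlin, log_mul hp.ne' (exp_pos _).ne', log_exp] at h
  rw [negMulLog]
  nlinarith

theorem sum_sq_integral_mul_div_integral_le {M : Type*} [Fintype M] [IsFiniteMeasure μ]
    {f : α → ℝ} {b : M → α → ℝ} (hf : Integrable f μ) (hf2 : Integrable (fun x ↦ f x ^ 2) μ)
    (hbm : ∀ m, Measurable (b m)) (hb : ∀ m x, b m x ∈ Set.Icc 0 1)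
    (hsum : ∀ x, ∑ m, b m x = 1) :
    ∑ m, (∫ x, f x * b m x ∂μ) ^ 2 / ∫ x, b m x ∂μ ≤ ∫ x, f x ^ 2 ∂μ := by
  have hbound : ∀ m, ∀ᵐ x ∂μ, ‖b m x‖ ≤ 1 := fun m ↦ ae_norm_le_one_of_mem_Icc (hb m)
  have hf2b : ∀ m, Integrable (fun x ↦ f x ^ 2 * b m x) μ := fun m ↦
    hf2.mul_bdd (hbm m).aestronglyMeasurable (hbound m)
  calc ∑ m, (∫ x, f x * b m x ∂μ) ^ 2 / ∫ x, b m x ∂μ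
      ≤ ∑ m, ∫ x, f x ^ 2 * b m x ∂μ := by
        refine sum_le_sum fun m _ ↦ div_le_of_le_mul₀ (integral_nonneg fun x ↦ (hb m x).1)
          (integral_nonneg fun x ↦ mul_nonneg (sq_nonneg _) (hb m x).1) ?_
        exact (sq_integral_mul_le_integral_mul_integral_sq_mul (fun x ↦ (hb m x).1)
          (integrable_of_mem_Icc (hbm m) (hb m))
          (hf.mul_bdd (hbm m).aestronglyMeasurable (hbound m)) (hf2b m)).trans_eq (mul_comm _ _)
    _ = ∫ x, f x ^ 2 ∂μ := by
        rw [← integral_finsetSum _ fun m _ ↦ hf2b m]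
        simp only [← mul_sum, hsum, mul_one]

end WeightedBounds

theorem sum_negMulLog_le_log_card {M : Type*} [Fintype M] {p : M → ℝ} (hp : ∀ m, 0 ≤ p m)
    (hsum : ∑ m, p m = 1) : ∑ m, negMulLog (p m) ≤ log (Fintype.card M) := by
  have hM : Nonempty M := by
    by_contra h
    simp [not_nonempty_iff.mp h] at hsum
  have hN : (0 : ℝ) < Fintype.card M := by exact_mod_cast Fintype.card_pos
  have h := concaveOn_negMulLog.le_map_sum (t := univ) (w := fun _ ↦ (Fintype.card M : ℝ)⁻¹)
    (p := p) (fun _ _ ↦ by positivity) (by simp [card_univ, hN.ne']) (fun m _ ↦ hp m)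
  simp only [smul_eq_mul, ← mul_sum, hsum, mul_one, negMulLog_def, log_inv] at h
  rw [← mul_le_mul_iff_right₀ (inv_pos.mpr hN), negMulLog_def]
  linarith

theorem integrable_exp_mul_sub_gaussianReal (μ : ℝ) (v : ℝ≥0) (s : ℝ) :
    Integrable (fun y ↦ exp (s * (y - μ))) (gaussianReal μ v) := by
  rw [← mgf_pos_iff, mgf_gaussianReal (by rw [gaussianReal_map_sub_const, sub_self])]
  exact exp_pos _

theorem integral_exp_mul_sub_gaussianReal (μ : ℝ) (v : ℝ≥0) (s : ℝ) :
    ∫ y, exp (s * (y - μ)) ∂gaussianReal μ v = exp (v * s ^ 2 / 2) := by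
  have h := mgf_gaussianReal (X := fun y ↦ y - μ) (p := gaussianReal μ v) (μ := 0) (v := v)
    (by rw [gaussianReal_map_sub_const, sub_self]) s
  simpa [mgf] using h

theorem integral_sq_sub_gaussianReal (μ : ℝ) (v : ℝ≥0) :
    ∫ y, (y - μ) ^ 2 ∂gaussianReal μ v = v := by
  rw [← variance_fun_id_gaussianReal (μ := μ), variance_eq_integral aemeasurable_id',
    integral_id_gaussianReal]

section GaussianPi

variable {ι : Type*} [Fintype ι] (θ : ι → ℝ) (v : ℝ≥0)

theorem exp_mul_sum_eq_prod (t : ℝ) (u x : ι → ℝ) :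
    exp (t * ∑ i, u i * (x i - θ i)) = ∏ i, exp ((t * u i) * (x i - θ i)) := by
  rw [← exp_sum, mul_sum]
  simp only [mul_assoc]

theorem integrable_exp_mul_sum_gaussianPi (u : ι → ℝ) (t : ℝ) :
    Integrable (fun x ↦ exp (t * ∑ i, u i * (x i - θ i)))
      (Measure.pi fun i ↦ gaussianReal (θ i) v) := by
  simp only [exp_mul_sum_eq_prod]
  exact Integrable.fintype_prod fun i ↦ integrable_exp_mul_sub_gaussianReal (θ i) v _

theorem integral_exp_mul_sum_gaussianPi (u : ι → ℝ) (t : ℝ) :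
    ∫ x, exp (t * ∑ i, u i * (x i - θ i)) ∂(Measure.pi fun i ↦ gaussianReal (θ i) v)
      = exp (t ^ 2 * (v * ∑ i, u i ^ 2) / 2) := by
  simp only [exp_mul_sum_eq_prod]
  rw [integral_fintype_prod_eq_prod (E := fun _ ↦ ℝ) fun i y ↦ exp (t * u i * (y - θ i))]
  simp only [integral_exp_mul_sub_gaussianReal, ← exp_sum]
  congr 1
  rw [mul_sum, mul_sum, sum_div]
  exact sum_congr rfl fun i _ ↦ by ring

theorem integrable_sub_gaussianPi (i : ι) :
    Integrable (fun x ↦ x i - θ i) (Measure.pi fun i ↦ gaussianReal (θ i) v) :=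
  integrable_comp_eval (X := fun _ ↦ ℝ) (i := i) (f := fun y : ℝ ↦ y - θ i)
    (((memLp_id_gaussianReal 1).integrable le_rfl).sub (integrable_const _))

theorem integrable_sq_sub_gaussianPi (i : ι) :
    Integrable (fun x ↦ (x i - θ i) ^ 2) (Measure.pi fun i ↦ gaussianReal (θ i) v) :=
  integrable_comp_eval (X := fun _ ↦ ℝ) (i := i) (f := fun y : ℝ ↦ (y - θ i) ^ 2)
    (((memLp_id_gaussianReal 2).sub (memLp_const _)).integrable_sq)

theorem integral_sq_sub_gaussianPi (i : ι) :
    ∫ x, (x i - θ i) ^ 2 ∂(Measure.pi fun i ↦ gaussianReal (θ i) v) = v := by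
  rw [integral_comp_eval (X := fun _ ↦ ℝ) (i := i) (f := fun y : ℝ ↦ (y - θ i) ^ 2)
    (by fun_prop), integral_sq_sub_gaussianReal]

theorem sum_sq_integral_sub_mul_le_negMulLog (hv : v ≠ 0) {b : (ι → ℝ) → ℝ}
    (hbm : Measurable b) (hb : ∀ x, b x ∈ Set.Icc 0 1)
    (hp : 0 < ∫ x, b x ∂(Measure.pi fun i ↦ gaussianReal (θ i) v)) :
    ∑ i, (∫ x, (x i - θ i) * b x ∂(Measure.pi fun i ↦ gaussianReal (θ i) v)) ^ 2
      ≤ 2 * v * (∫ x, b x ∂(Measure.pi fun i ↦ gaussianReal (θ i) v))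
        * negMulLog (∫ x, b x ∂(Measure.pi fun i ↦ gaussianReal (θ i) v)) := by
  set γ := Measure.pi fun i ↦ gaussianReal (θ i) v
  set p := ∫ x, b x ∂γ
  set g := fun i ↦ ∫ x, (x i - θ i) * b x ∂γ
  set S := ∑ i, g i ^ 2
  have hbi : Integrable b γ := integrable_of_mem_Icc hbm hb
  have hcoord : ∀ i, Integrable (fun x ↦ (x i - θ i) * b x) γ := fun i ↦
    (integrable_sub_gaussianPi θ v i).mul_bdd hbm.aestronglyMeasurable
      (ae_norm_le_one_of_mem_Icc hb)
  obtain hS | hS := (show 0 ≤ S from sum_nonneg fun i _ ↦ sq_nonneg (g i)).eq_or_lt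
  · rw [← hS]
    have := negMulLog_nonneg hp.le
      ((integral_mono hbi (integrable_const 1) fun x ↦ (hb x).2).trans_eq (by simp))
    positivity
  -- test the correlation in the direction `g` itself
  have hZb_eq : ∀ x, (∑ i, g i * (x i - θ i)) * b x = ∑ i, g i * ((x i - θ i) * b x) :=
    fun x ↦ by simp only [sum_mul, mul_assoc]
  have hZb : ∫ x, (∑ i, g i * (x i - θ i)) * b x ∂γ = S := by
    simp only [hZb_eq]
    rw [integral_finsetSum _ fun i _ ↦ (hcoord i).const_mul _]
    simp only [integral_const_mul, S, g, sq]
  have key := sq_integral_mul_le_negMulLog_of_integral_exp_le (K := v * S) (by positivity)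
    hb hbi hp
    ((integrable_finsetSum univ fun i _ ↦ (hcoord i).const_mul (g i)).congr
      (.of_forall fun x ↦ (hZb_eq x).symm))
    (integrable_exp_mul_sum_gaussianPi θ v g)
    (fun t ↦ (integral_exp_mul_sum_gaussianPi θ v g t).le) (hZb ▸ hS)
  rw [hZb, sq] at key
  nlinarith

variable {M : Type*} [Fintype M]

-- `b m x` is the probability that the quantizer outputs `m` given `X = x`; the trace is
-- `∑ₘ P(M = m) ‖E[S_θ(X) | M = m]‖²` with the score `S_θ(x) = (x - θ) / v`.
noncomputable def quantizedFisherTrace (b : M → (ι → ℝ) → ℝ) : ℝ :=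
  ∑ m, (∫ x, b m x ∂(Measure.pi fun i ↦ gaussianReal (θ i) v)) *
    ∑ i, ((∫ x, ((x i - θ i) / v) * b m x ∂(Measure.pi fun i ↦ gaussianReal (θ i) v)) /
      ∫ x, b m x ∂(Measure.pi fun i ↦ gaussianReal (θ i) v)) ^ 2

theorem quantizedFisherTrace_eq (b : M → (ι → ℝ) → ℝ) :
    quantizedFisherTrace θ v b =
      (∑ m, (∑ i, (∫ x, (x i - θ i) * b m x ∂(Measure.pi fun i ↦ gaussianReal (θ i) v)) ^ 2) /
        ∫ x, b m x ∂(Measure.pi fun i ↦ gaussianReal (θ i) v)) / (v : ℝ) ^ 2 := by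
  have halg : ∀ (p c : ℝ) (g : ι → ℝ),
      p * ∑ i, (g i / c / p) ^ 2 = (∑ i, g i ^ 2) / p / c ^ 2 := fun p c g ↦ by
    rcases eq_or_ne p 0 with rfl | hp
    · simp
    rw [mul_sum, sum_div, sum_div]
    exact sum_congr rfl fun i _ ↦ by field_simp
  simp only [quantizedFisherTrace, div_mul_eq_mul_div, integral_div, halg, sum_div]

theorem quantizedFisherTrace_le_card_div {b : M → (ι → ℝ) → ℝ} (hv : v ≠ 0)
    (hbm : ∀ m, Measurable (b m)) (hb : ∀ m x, b m x ∈ Set.Icc 0 1)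
    (hsum : ∀ x, ∑ m, b m x = 1) :
    quantizedFisherTrace θ v b ≤ Fintype.card ι / v := by
  have hv' : (0 : ℝ) < v := by positivity
  rw [quantizedFisherTrace_eq, div_le_div_iff₀ (by positivity) hv', sq, ← mul_assoc]
  refine mul_le_mul_of_nonneg_right ?_ hv'.le
  calc _ = ∑ i, ∑ m,
        (∫ x, (x i - θ i) * b m x ∂(Measure.pi fun i ↦ gaussianReal (θ i) v)) ^ 2 /
          ∫ x, b m x ∂(Measure.pi fun i ↦ gaussianReal (θ i) v) := by
        simp only [sum_div]
        exact sum_comm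
    _ ≤ ∑ i : ι, (v : ℝ) := sum_le_sum fun i _ ↦
        (sum_sq_integral_mul_div_integral_le (integrable_sub_gaussianPi θ v i)
          (integrable_sq_sub_gaussianPi θ v i) hbm hb hsum).trans_eq
          (integral_sq_sub_gaussianPi θ v i)
    _ = Fintype.card ι * v := by simp

theorem quantizedFisherTrace_le_two_mul_log_card_div {b : M → (ι → ℝ) → ℝ} (hv : v ≠ 0)
    (hbm : ∀ m, Measurable (b m)) (hb : ∀ m x, b m x ∈ Set.Icc 0 1)
    (hsum : ∀ x, ∑ m, b m x = 1) :
    quantizedFisherTrace θ v b ≤ 2 * log (Fintype.card M) / v := by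
  rw [quantizedFisherTrace_eq]
  set γ := Measure.pi fun i ↦ gaussianReal (θ i) v
  have hv' : (0 : ℝ) < v := by positivity
  have hp_sum : ∑ m, ∫ x, b m x ∂γ = 1 := by
    rw [← integral_finsetSum _ fun m _ ↦ integrable_of_mem_Icc (hbm m) (hb m)]
    simp [hsum]
  rw [div_le_div_iff₀ (by positivity) hv', sq, ← mul_assoc]
  refine mul_le_mul_of_nonneg_right ?_ hv'.le
  calc _ ≤ ∑ m, 2 * (v : ℝ) * negMulLog (∫ x, b m x ∂γ) := sum_le_sum fun m _ ↦ by
        rcases (integral_nonneg fun x ↦ (hb m x).1 : 0 ≤ ∫ x, b m x ∂γ).eq_or_lt with hp | hp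
        · simp [← hp]
        rw [div_le_iff₀ hp]
        exact (sum_sq_integral_sub_mul_le_negMulLog θ v hv (hbm m) (hb m) hp).trans_eq
          (by ring)
    _ ≤ 2 * v * log (Fintype.card M) := by
        rw [← mul_sum]
        exact mul_le_mul_of_nonneg_left (sum_negMulLog_le_log_card
          (fun m ↦ integral_nonneg fun x ↦ (hb m x).1) hp_sum) (by positivity)
    _ = _ := by ring

end GaussianPi

/-- Gaussian location model: for X ~ N(θ, σ²I_d) and any 2^k-valued quantization M
of X, the trace of the Fisher information of M (expressed via the geometric
identity Tr(I_M(θ)) = ∑ₘ p(m|θ)‖E[S_θ(X)|m]‖₂² with score S_θ(x) = (x−θ)/σ²)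
is at most min{d/σ², (32/3)·k/σ²}. -/
theorem gaussian_location_trace_fisher_bound
    (d k N : ℕ) (hN : N = 2 ^ k)
    (σ : ℝ) (hσ : 0 < σ) (θ : Fin d → ℝ)
    (b : Fin N → (Fin d → ℝ) → ℝ)
    (hbmeas : ∀ m, Measurable (b m))
    (hb : ∀ m x, b m x ∈ Set.Icc (0 : ℝ) 1) (hbsum : ∀ x, ∑ m, b m x = 1) :
    (∑ m, (∫ x, b m x ∂(Measure.pi fun i => gaussianReal (θ i) (Real.toNNReal (σ ^ 2)))) *
        ∑ i, ((∫ x, ((x i - θ i) / σ ^ 2) * b m x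
                ∂(Measure.pi fun i => gaussianReal (θ i) (Real.toNNReal (σ ^ 2)))) /
              (∫ x, b m x
                ∂(Measure.pi fun i => gaussianReal (θ i) (Real.toNNReal (σ ^ 2))))) ^ 2)
      ≤ min ((d : ℝ) / σ ^ 2) ((32 / 3) * (k : ℝ) / σ ^ 2) := by
  have hv : ((σ ^ 2).toNNReal : ℝ) = σ ^ 2 := Real.coe_toNNReal _ (by positivity)
  have hv0 : (σ ^ 2).toNNReal ≠ 0 := by simpa using hσ.ne'
  have h1 := quantizedFisherTrace_le_card_div θ _ hv0 hbmeas hb hbsum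
  have h2 := quantizedFisherTrace_le_two_mul_log_card_div θ _ hv0 hbmeas hb hbsum
  unfold quantizedFisherTrace at h1 h2
  rw [hv] at h1 h2
  refine le_min (h1.trans_eq (by simp)) (h2.trans ?_)
  rw [Fintype.card_fin, hN, Nat.cast_pow, Nat.cast_ofNat, log_pow]
  gcongr ?_ / _
  nlinarith [log_two_lt_d9, k.cast_nonneg (α := ℝ)]
end
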